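/- arXiv:1703.08569 — 3 statements merged into one kernel-verified Lean document; each statement's English description precedes it below -/
import Mathlib

section
/- Let R be a commutative Noetherian local ring with maximal ideal m and residue field κ = R/m. Let M• be a bounded-above cochain complex of R-modules all of whose terms are finitely generated flat R-modules. If the complex κ ⊗_R M• (with terms κ ⊗_R M^n and differentials id ⊗ d) is exact (acyclic), then M• is exact. -/
/-!
Over a local ring, finite flat modules are free. By descending induction on `n` the boundary
module `im dⁿ ⊆ Mⁿ⁺¹` is projective (it vanishes for large `n`). If `im dⁿ` is projective, then
`Zⁿ = ker dⁿ` is a direct summand of `Mⁿ`, so `κ ⊗ Zⁿ` embeds into the cycles of `κ ⊗ M` in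
degree `n`. Exactness of `κ ⊗ M` then makes `κ ⊗ Mⁿ⁻¹ → κ ⊗ Zⁿ` surjective, hence `Mⁿ⁻¹ → Zⁿ` is
surjective by Nakayama: `M` is exact at `n`, and `im dⁿ⁻¹ = Zⁿ` is projective.
-/

open CategoryTheory Limits
open LinearMap IsLocalRing

section

variable {R M N P : Type*} [CommRing R] [AddCommGroup M] [AddCommGroup N] [AddCommGroup P]
  [Module R M] [Module R N] [Module R P]

theorem LinearMap.exists_leftInverse_ker_subtype (g : N →ₗ[R] P)
    [Module.Projective R (range g)] :
    ∃ r : N →ₗ[R] ker g, r ∘ₗ (ker g).subtype = LinearMap.id := by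
  have hexact : Function.Exact (ker g).subtype g.rangeRestrict := by
    rw [LinearMap.exact_iff, ker_rangeRestrict, Submodule.range_subtype]
  exact ((hexact.split_tfae Subtype.val_injective g.surjective_rangeRestrict).out 0 1).mp
    (Module.projective_lifting_property _ _ g.surjective_rangeRestrict)

theorem Module.Projective.ker_of_projective_range [Module.Projective R N] (g : N →ₗ[R] P)
    [Module.Projective R (range g)] : Module.Projective R (ker g) :=
  have ⟨r, hr⟩ := g.exists_leftInverse_ker_subtype
  .of_split _ r hr

theorem IsLocalRing.surjective_of_lTensor_residueField_surjective [IsLocalRing R]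
    [Module.Finite R N] (f : M →ₗ[R] N)
    (hf : Function.Surjective (f.lTensor (ResidueField R))) : Function.Surjective f := by
  rw [← range_eq_top, ← map_tensorProduct_mk_eq_top, eq_top_iff]
  rintro z -
  obtain ⟨y, rfl⟩ := hf z
  induction y using TensorProduct.induction_on with
  | zero => simp
  | tmul c x =>
    obtain ⟨c, rfl⟩ := residue_surjective c
    have : residue R c ⊗ₜ[R] f x = c • ((1 : ResidueField R) ⊗ₜ[R] f x) := by
      rw [TensorProduct.smul_tmul', Algebra.smul_def, mul_one]; rfl
    rw [lTensor_tmul, this]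
    exact Submodule.smul_mem _ c ⟨f x, mem_range_self f x, rfl⟩
  | add y z hy hz => rw [map_add]; exact add_mem hy hz

theorem IsLocalRing.exact_of_lTensor_residueField_exact [IsLocalRing R] [Module.Finite R N]
    {f : M →ₗ[R] N} {g : N →ₗ[R] P} [Module.Projective R (range g)] (hfg : g ∘ₗ f = 0)
    (h : Function.Exact (f.lTensor (ResidueField R)) (g.lTensor (ResidueField R))) :
    Function.Exact f g := by
  obtain ⟨r, hr⟩ := g.exists_leftInverse_ker_subtype
  have : Module.Finite R (ker g) := .of_surjective r fun x => ⟨x, congr($hr x)⟩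
  let f' : M →ₗ[R] ker g := f.codRestrict (ker g) fun x => congr($hfg x)
  have hf' : Function.Surjective f' := by
    refine surjective_of_lTensor_residueField_surjective f' fun y => ?_
    obtain ⟨x, hx⟩ := (h ((ker g).subtype.lTensor _ y)).mp <| by
      rw [← LinearMap.comp_apply, ← lTensor_comp, comp_ker_subtype, lTensor_zero,
        LinearMap.zero_apply]
    refine ⟨x, ?_⟩
    calc f'.lTensor _ x = (r ∘ₗ (ker g).subtype ∘ₗ f').lTensor _ x := by
          rw [← comp_assoc, hr, id_comp]
      _ = y := by
          rw [subtype_comp_codRestrict, lTensor_comp, LinearMap.comp_apply, hx,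
            ← LinearMap.comp_apply, ← lTensor_comp, hr, lTensor_id, LinearMap.id_apply]
  refine fun y => ⟨fun hy => ?_, ?_⟩
  · obtain ⟨x, hx⟩ := hf' ⟨y, hy⟩
    exact ⟨x, congr_arg Subtype.val hx⟩
  · rintro ⟨x, rfl⟩
    exact congr($hfg x)

end

theorem CochainComplex.exactAt_iff_function_exact {R : Type*} [Ring R]
    (M : CochainComplex (ModuleCat R) ℤ) (n : ℤ) :
    M.ExactAt n ↔ Function.Exact (M.d (n - 1) n).hom (M.d n (n + 1)).hom := by
  rw [HomologicalComplex.exactAt_iff' _ (n - 1) n (n + 1) (by simp) (by simp),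
    ShortComplex.ShortExact.moduleCat_exact_iff_function_exact]
  rfl

theorem stmt_0_general (R : Type) [CommRing R] [IsLocalRing R]
    (M : CochainComplex (ModuleCat R) ℤ)
    (hbdd : ∃ N : ℤ, ∀ n : ℤ, N ≤ n → IsZero (M.X n))
    (hfin : ∀ n : ℤ, Module.Finite R (M.X n))
    (hflat : ∀ n : ℤ, Module.Flat R (M.X n))
    (hexact : ∀ n : ℤ,
      ((((MonoidalCategory.tensorLeft
          (ModuleCat.of R (IsLocalRing.ResidueField R))).mapHomologicalComplex
          (ComplexShape.up ℤ)).obj M).ExactAt n)) :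
    ∀ n : ℤ, M.ExactAt n := by
  obtain ⟨N, hN⟩ := hbdd
  have hκexact (n : ℤ) : Function.Exact ((M.d (n - 1) n).hom.lTensor (ResidueField R))
      ((M.d n (n + 1)).hom.lTensor (ResidueField R)) :=
    (CochainComplex.exactAt_iff_function_exact _ n).mp (hexact n)
  have hfree (n : ℤ) : Module.Free R (M.X n) :=
    have := hfin n; have := hflat n; Module.free_of_flat_of_isLocalRing
  have hdd (n : ℤ) : (M.d n (n + 1)).hom ∘ₗ (M.d (n - 1) n).hom = 0 :=
    congr_arg ModuleCat.Hom.hom (M.d_comp_d _ _ _)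
  have hproj (n : ℤ) : Module.Projective R (range (M.d n (n + 1)).hom) := by
    induction n using Int.inductionOn' (b := N) with
    | zero =>
      have := ModuleCat.subsingleton_of_isZero (hN (N + 1) (by omega))
      infer_instance
    | succ k hk _ =>
      have := ModuleCat.subsingleton_of_isZero (hN (k + 1 + 1) (by omega))
      infer_instance
    | pred k _ ih =>
      have := hfin k
      have := hfree k
      have hk := (exact_of_lTensor_residueField_exact (hdd k) (hκexact k)).linearMap_ker_eq
      rw [sub_add_cancel, ← hk]
      exact Module.Projective.ker_of_projective_range _
  intro n
  have := hfin n
  exact (CochainComplex.exactAt_iff_function_exact M n).mpr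
    (exact_of_lTensor_residueField_exact (hdd n) (hκexact n))

/-- Let `R` be a commutative Noetherian local ring with residue field `κ`.
If `M` is a bounded-above cochain complex of finitely generated flat `R`-modules such that
`κ ⊗_R M` is acyclic, then `M` is acyclic. -/
theorem stmt_0 (R : Type) [CommRing R] [IsNoetherianRing R] [IsLocalRing R]
    (M : CochainComplex (ModuleCat R) ℤ)
    (hbdd : ∃ N : ℤ, ∀ n : ℤ, N ≤ n → IsZero (M.X n))
    (hfin : ∀ n : ℤ, Module.Finite R (M.X n))
    (hflat : ∀ n : ℤ, Module.Flat R (M.X n))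
    (hexact : ∀ n : ℤ,
      ((((MonoidalCategory.tensorLeft
          (ModuleCat.of R (IsLocalRing.ResidueField R))).mapHomologicalComplex
          (ComplexShape.up ℤ)).obj M).ExactAt n)) :
    ∀ n : ℤ, M.ExactAt n :=
  stmt_0_general R M hbdd hfin hflat hexact
end

section
/- Let k be a field, Λ a finite-dimensional k-algebra, R a commutative Artinian local k-algebra with maximal ideal m_R, and A = R ⊗_k Λ. Let f : M• → N• be a chain map between bounded-above cochain complexes of A-modules all of whose terms are finite-rank free A-modules. If the induced chain map between the reductions of M• and N• modulo m_R is a quasi-isomorphism, then f is a quasi-isomorphism. -/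
/-!
Pass to the mapping cone `C` of `f`: a bounded-above complex of projective `A`-modules whose
reduction modulo `I = m_R A` is acyclic, where `I` is nilpotent because `m_R` is nilpotent
(`R` Artinian local) and central in `A`. Show `C` acyclic by descending induction on the degree:
if the cycles `Z^(j+1)` are projective and equal to the boundaries, then `d : C^j → Z^(j+1)`
splits, so `Z^j` is a direct summand of `C^j`. Through the retraction, acyclicity mod `I` gives
`Z^j ⊆ B^j + I Z^j`, and Nakayama's lemma for the nilpotent ideal `I` gives `Z^j = B^j`.
-/

open CategoryTheory

/-- The reduction-mod-`I` functor on modules over a ring `A`, sending `M` to `M ⧸ I·M`.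
For `A = R ⊗_k Λ` and `I` the ideal generated by the image of `m_R`, this is
reduction modulo `m_R`. -/
noncomputable def modIdealFunctor (A : Type) [Ring A] (I : Ideal A) :
    ModuleCat A ⥤ ModuleCat A where
  obj M := ModuleCat.of A (M ⧸ (I • (⊤ : Submodule A M)))
  map {M N} f := ModuleCat.ofHom (Submodule.mapQ _ _ f.hom (by
    rw [← Submodule.map_le_iff_le_comap, Submodule.map_smul'']
    exact Submodule.smul_mono le_rfl le_top))
  map_id M := by
    apply ModuleCat.hom_ext
    apply Submodule.linearMap_qext
    ext x
    rfl
  map_comp f g := by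
    apply ModuleCat.hom_ext
    apply Submodule.linearMap_qext
    ext x
    rfl

instance (A : Type) [Ring A] (I : Ideal A) : (modIdealFunctor A I).Additive where
  map_add {X Y f g} := by
    apply ModuleCat.hom_ext
    apply Submodule.linearMap_qext
    ext x
    rfl

open Limits

section

variable {A : Type*} [Ring A]

theorem Submodule.le_of_le_sup_smul_of_pow_eq_bot {M : Type*} [AddCommGroup M] [Module A M]
    {I : Ideal A} {n : ℕ} (hI : I ^ n = ⊥) {S T : Submodule A M} (h : S ≤ T ⊔ I • S) :
    S ≤ T := by
  have key : ∀ t : ℕ, S ≤ T ⊔ I ^ t • S := by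
    intro t
    induction t with
    | zero => simp [Submodule.pow_zero, Ideal.one_eq_top]
    | succ t ih =>
      calc S ≤ T ⊔ I ^ t • (T ⊔ I • S) := ih.trans (sup_le_sup_left (smul_mono_right _ h) _)
        _ = T ⊔ I ^ t • T ⊔ I ^ (t + 1) • S := by
          rw [smul_sup, Submodule.pow_succ, Submodule.mul_smul, sup_assoc]
        _ ≤ T ⊔ I ^ (t + 1) • S := sup_le_sup_right (sup_le le_rfl smul_le_right) _
  simpa [hI] using key n

namespace Ideal

variable {R : Type*} [CommSemiring R] [Algebra R A]

theorem isTwoSided_map_algebraMap (J : Ideal R) : (J.map (algebraMap R A)).IsTwoSided where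
  mul_mem_of_left b ha := by
    induction ha using Submodule.span_induction with
    | mem _ hx =>
      obtain ⟨r, hr, rfl⟩ := hx
      rw [Algebra.commutes]
      exact mul_mem_left _ _ (mem_map_of_mem _ hr)
    | zero => simp
    | add x y _ _ hx hy => rw [add_mul]; exact add_mem hx hy
    | smul c x _ hx => rw [smul_eq_mul, mul_assoc]; exact mul_mem_left _ _ hx

theorem map_algebraMap_mul_le (J K : Ideal R) :
    J.map (algebraMap R A) * K.map (algebraMap R A) ≤ (J * K).map (algebraMap R A) := by
  have : (span (algebraMap R A '' J)).IsTwoSided := isTwoSided_map_algebraMap J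
  rw [map, map, span_mul_span, map]
  refine span_mono ?_
  rintro _ ⟨_, ⟨a, ha, rfl⟩, _, ⟨b, hb, rfl⟩, rfl⟩
  exact ⟨a * b, mul_mem_mul ha hb, map_mul _ _ _⟩

theorem map_algebraMap_pow_le (J : Ideal R) (n : ℕ) :
    J.map (algebraMap R A) ^ n ≤ (J ^ n).map (algebraMap R A) := by
  induction n with
  | zero => rw [Submodule.pow_zero, pow_zero, one_eq_top, one_eq_top, map_top]
  | succ n ih =>
    rw [Submodule.pow_succ, pow_succ]
    exact (mul_mono_left ih).trans (map_algebraMap_mul_le _ _)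

end Ideal

end

namespace LinearMap

variable {A W X Y : Type*} [Ring A] [AddCommGroup W] [Module A W] [AddCommGroup X] [Module A X]
  [AddCommGroup Y] [Module A Y]

theorem exists_retraction_ker (g : X →ₗ[A] Y) [Module.Projective A (range g)] :
    ∃ ρ : X →ₗ[A] ker g, ∀ x : ker g, ρ x = x := by
  obtain ⟨σ, hσ⟩ := Module.projective_lifting_property g.rangeRestrict LinearMap.id
    g.surjective_rangeRestrict
  have hgσ (y : range g) : g (σ y) = y := congr(Subtype.val ($hσ y))
  refine ⟨(LinearMap.id - σ ∘ₗ g.rangeRestrict).codRestrict (ker g) fun x => ?_,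
    fun x => Subtype.ext ?_⟩
  · simp [show g.rangeRestrict x = 0 from Subtype.ext x.2]
  · rw [mem_ker, sub_apply, map_sub, comp_apply, hgσ]
    exact sub_self _

theorem projective_ker (g : X →ₗ[A] Y) [Module.Projective A X] [Module.Projective A (range g)] :
    Module.Projective A (ker g) :=
  let ⟨ρ, hρ⟩ := exists_retraction_ker g
  Module.Projective.of_split (ker g).subtype ρ (LinearMap.ext hρ)

/-- A retraction `ρ : X → ker g` turns a cycle `x = f w + v` with `v ∈ I X` into
`x = ρ x = f w + ρ v` with `ρ v ∈ I (ker g)`. -/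
theorem ker_le_range_sup_smul_ker {f : W →ₗ[A] X} {g : X →ₗ[A] Y} [Module.Projective A (range g)]
    (hfg : range f ≤ ker g) {I : Ideal A} (h : ker g ≤ range f ⊔ I • ⊤) :
    ker g ≤ range f ⊔ I • ker g := by
  obtain ⟨ρ, hρ⟩ := exists_retraction_ker g
  intro x hx
  obtain ⟨_, ⟨w, rfl⟩, v, hv, rfl⟩ := Submodule.mem_sup.1 (h hx)
  have hρv : (ρ v : X) ∈ I • ker g := by
    have hρI : (I • ⊤ : Submodule A X).map ρ ≤ I • ⊤ := by
      rw [Submodule.map_smul'']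
      exact Submodule.smul_mono le_rfl le_top
    have hsubtype : (I • ⊤ : Submodule A (ker g)).map (ker g).subtype = I • ker g := by
      rw [Submodule.map_smul'', Submodule.map_top, Submodule.range_subtype]
    exact hsubtype ▸ Submodule.mem_map_of_mem (hρI (Submodule.mem_map_of_mem hv))
  have hfw : ρ (f w) = ⟨f w, hfg ⟨w, rfl⟩⟩ := hρ ⟨f w, hfg ⟨w, rfl⟩⟩
  have hxρ : f w + v = f w + ρ v :=
    calc f w + v = ρ (f w + v) := congr(Subtype.val $(hρ ⟨_, hx⟩)).symm
      _ = f w + ρ v := by rw [map_add, Submodule.coe_add, hfw]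
  exact hxρ ▸ Submodule.add_mem_sup ⟨w, rfl⟩ hρv

end LinearMap

namespace CochainComplex

open LinearMap (ker range)

section

variable {A : Type} [Ring A] (K : CochainComplex (ModuleCat A) ℤ)

theorem exactAt_iff_ker_le_range (j : ℤ) :
    K.ExactAt j ↔ ker (K.d j (j + 1)).hom ≤ range (K.d (j - 1) j).hom := by
  rw [K.exactAt_iff' (j - 1) j (j + 1) (by simp) (by simp), ShortComplex.moduleCat_exact_iff]
  exact ⟨fun h x hx => h x hx, fun h x hx => h hx⟩

theorem range_d_le_ker_d (i j k : ℤ) : range (K.d i j).hom ≤ ker (K.d j k).hom := by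
  rintro _ ⟨x, rfl⟩
  rw [LinearMap.mem_ker, ← ModuleCat.comp_apply, K.d_comp_d]
  rfl

theorem ker_d_le_range_d_sup_smul {I : Ideal A} {j : ℤ}
    (h : (((modIdealFunctor A I).mapHomologicalComplex (ComplexShape.up ℤ)).obj K).ExactAt j) :
    ker (K.d j (j + 1)).hom ≤ range (K.d (j - 1) j).hom ⊔ I • ⊤ := by
  rw [exactAt_iff_ker_le_range] at h
  intro x hx
  obtain ⟨y, hy⟩ := h (x := Submodule.Quotient.mk x) (by
    show Submodule.Quotient.mk (K.d j (j + 1) x) = 0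
    rw [show K.d j (j + 1) x = 0 from hx, Submodule.Quotient.mk_zero])
  obtain ⟨y, rfl⟩ := Submodule.Quotient.mk_surjective _ y
  have hdy : K.d (j - 1) j y - x ∈ I • ⊤ := (Submodule.Quotient.eq _).1 hy
  rw [Submodule.mem_sup]
  exact ⟨K.d (j - 1) j y, ⟨y, rfl⟩, x - K.d (j - 1) j y, by simpa using neg_mem hdy, by abel⟩

theorem exactAt_of_exactAt_reduction {I : Ideal A} {n : ℕ} (hI : I ^ n = ⊥)
    (hproj : ∀ j, Module.Projective A (K.X j)) (hbdd : ∃ a : ℤ, ∀ j, a ≤ j → IsZero (K.X j))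
    (hred : ∀ j,
      (((modIdealFunctor A I).mapHomologicalComplex (ComplexShape.up ℤ)).obj K).ExactAt j)
    (j : ℤ) : K.ExactAt j := by
  let P (j : ℤ) : Prop := Module.Projective A (ker (K.d j (j + 1)).hom) ∧
    ker (K.d j (j + 1)).hom ≤ range (K.d (j - 1) j).hom
  have step (j : ℤ) (h : P (j + 1)) : P j := by
    obtain ⟨hZproj, hZexact⟩ := h
    rw [add_sub_cancel_right] at hZexact
    have hB : range (K.d j (j + 1)).hom = ker (K.d (j + 1) (j + 1 + 1)).hom :=
      le_antisymm (K.range_d_le_ker_d _ _ _) hZexact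
    have : Module.Projective A (range (K.d j (j + 1)).hom) := hB ▸ hZproj
    exact ⟨LinearMap.projective_ker _, Submodule.le_of_le_sup_smul_of_pow_eq_bot hI
      (LinearMap.ker_le_range_sup_smul_ker (K.range_d_le_ker_d _ _ _)
        (K.ker_d_le_range_d_sup_smul (hred j)))⟩
  obtain ⟨a, ha⟩ := hbdd
  have base (j : ℤ) (hj : a ≤ j) : P j := by
    have := ModuleCat.subsingleton_of_isZero (ha j hj)
    exact ⟨inferInstance, fun x _ => Subsingleton.elim x 0 ▸ zero_mem _⟩
  have hP (j : ℤ) : P j := by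
    rcases le_total a j with hj | hj
    · exact base j hj
    · induction j, hj using Int.leInductionDown with
      | base => exact base a le_rfl
      | pred j _ ih => exact step (j - 1) ((sub_add_cancel j 1).symm ▸ ih)
  exact (K.exactAt_iff_ker_le_range j).2 (hP j).2

end

theorem quasiIso_iff_exactAt_mappingCone {C : Type*} [Category C] [Abelian C]
    {K L : CochainComplex C ℤ} (φ : K ⟶ L) :
    QuasiIso φ ↔ ∀ n : ℤ, (mappingCone φ).ExactAt n := by
  rw [← HomologicalComplex.mem_quasiIso_iff, ← HomotopyCategory.quotient_map_mem_quasiIso_iff,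
    HomotopyCategory.quasiIso_eq_trW_subcategoryAcyclic,
    ← HomotopyCategory.quotient_obj_mem_subcategoryAcyclic_iff_exactAt]
  exact ObjectProperty.trW_iff_of_distinguished _ _
    (HomotopyCategory.mappingCone_triangleh_distinguished φ)

theorem mappingCone.projective_X {A : Type} [Ring A] {M N : CochainComplex (ModuleCat A) ℤ}
    (f : M ⟶ N) (hM : ∀ n, Module.Projective A (M.X n)) (hN : ∀ n, Module.Projective A (N.X n))
    (n : ℤ) : Module.Projective A ((mappingCone f).X n) :=
  have e := HomologicalComplex.homotopyCofiber.XIsoBiprod f n (n + 1) rfl ≪≫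
    ModuleCat.biprodIsoProd _ _
  Module.Projective.of_equiv e.symm.toLinearEquiv

end CochainComplex

theorem stmt_1_general (k : Type) [Field k] (Λ : Type) [Ring Λ] [Algebra k Λ]
    (R : Type) [CommRing R] [IsArtinianRing R] [IsLocalRing R] [Algebra k R]
    (M N : CochainComplex (ModuleCat (TensorProduct k R Λ)) ℤ) (f : M ⟶ N)
    (hMbdd : ∃ a : ℤ, ∀ n : ℤ, a ≤ n → Limits.IsZero (M.X n))
    (hNbdd : ∃ a : ℤ, ∀ n : ℤ, a ≤ n → Limits.IsZero (N.X n))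
    (hMfree : ∀ n : ℤ, Module.Free (TensorProduct k R Λ) (M.X n))
    (hNfree : ∀ n : ℤ, Module.Free (TensorProduct k R Λ) (N.X n))
    (hred : QuasiIso (((modIdealFunctor (TensorProduct k R Λ)
        ((IsLocalRing.maximalIdeal R).map
          (algebraMap R (TensorProduct k R Λ)))).mapHomologicalComplex
        (ComplexShape.up ℤ)).map f)) :
    QuasiIso f := by
  obtain ⟨n, hn⟩ : IsNilpotent (IsLocalRing.maximalIdeal R) := by
    simpa [IsLocalRing.jacobson_eq_maximalIdeal ⊥ bot_ne_top] using
      IsArtinianRing.isNilpotent_jacobson_bot (R := R)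
  have hI : ((IsLocalRing.maximalIdeal R).map (algebraMap R (TensorProduct k R Λ))) ^ n = ⊥ :=
    eq_bot_iff.2 <| (Ideal.map_algebraMap_pow_le _ n).trans <| by
      rw [hn, Ideal.zero_eq_bot, Ideal.map_bot]
  rw [CochainComplex.quasiIso_iff_exactAt_mappingCone] at hred ⊢
  obtain ⟨aM, haM⟩ := hMbdd
  obtain ⟨aN, haN⟩ := hNbdd
  open CochainComplex in
  exact exactAt_of_exactAt_reduction _ hI
    (mappingCone.projective_X f (fun _ => inferInstance) (fun _ => inferInstance))
    ⟨max aM aN, fun j hj => (mappingCone.isZero_X_iff f j).2 ⟨haM _ (by omega), haN _ (by omega)⟩⟩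
    fun j => (hred j).of_iso (mappingCone.mapHomologicalComplexIso f _).symm

/-- Let `k` be a field, `Λ` a finite-dimensional `k`-algebra, `R` a commutative
Artinian local `k`-algebra with maximal ideal `m_R`, and `A = R ⊗_k Λ`. If `f : M ⟶ N` is a
chain map between bounded-above cochain complexes of finite-rank free `A`-modules whose
reduction modulo `m_R` is a quasi-isomorphism, then `f` is a quasi-isomorphism. -/
theorem stmt_1 (k : Type) [Field k] (Λ : Type) [Ring Λ] [Algebra k Λ] [FiniteDimensional k Λ]
    (R : Type) [CommRing R] [IsArtinianRing R] [IsLocalRing R] [Algebra k R]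
    (M N : CochainComplex (ModuleCat (TensorProduct k R Λ)) ℤ) (f : M ⟶ N)
    (hMbdd : ∃ a : ℤ, ∀ n : ℤ, a ≤ n → Limits.IsZero (M.X n))
    (hNbdd : ∃ a : ℤ, ∀ n : ℤ, a ≤ n → Limits.IsZero (N.X n))
    (hMfree : ∀ n : ℤ, Module.Free (TensorProduct k R Λ) (M.X n))
    (hMfin : ∀ n : ℤ, Module.Finite (TensorProduct k R Λ) (M.X n))
    (hNfree : ∀ n : ℤ, Module.Free (TensorProduct k R Λ) (N.X n))
    (hNfin : ∀ n : ℤ, Module.Finite (TensorProduct k R Λ) (N.X n))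
    (hred : QuasiIso (((modIdealFunctor (TensorProduct k R Λ)
        ((IsLocalRing.maximalIdeal R).map
          (algebraMap R (TensorProduct k R Λ)))).mapHomologicalComplex
        (ComplexShape.up ℤ)).map f)) :
    QuasiIso f :=
  stmt_1_general k Λ R M N f hMbdd hNbdd hMfree hNfree hred
end

section
/- Let k be a field, Λ a finite-dimensional k-algebra, and n ≥ 0 an integer. Let V• be a cochain complex of left Λ-modules with V^j = 0 for all j outside the interval [-n, 0] and with every term a finitely generated totally reflexive Λ-module, and let P• be a bounded cochain complex of finitely generated projective left Λ-modules with P^j = 0 for all j > 0. Then for every integer i > n, every morphism in the derived category D(Λ) from V• to P•⟦i⟧ is zero. -/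
/-!
Both complexes are bounded, so dévissage along brutal truncations reduces the claim to single
modules: with `V^j` placed in degree `j ≥ -n` and `P^{b+i}` in degree `b ≤ -i`, a morphism between
them is an element of `Ext^{j-b}(V^j, P^{b+i})` with `j - b ≥ i - n > 0`. As `P^{b+i}` is a direct
summand of some `Λ^r`, this group embeds into `Ext^{j-b}(V^j, Λ)^r`, which vanishes because `V^j`
is totally reflexive. The two dévissages combine through orthogonals: `P⟦i⟧` is right orthogonal
to all the `V^j[-j]`, hence `V`, an iterated extension of them, is left orthogonal to `P⟦i⟧`.
-/

open CategoryTheory Limits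

attribute [local instance] HasDerivedCategory.standard
attribute [local instance] CategoryTheory.hasExt_of_hasDerivedCategory

/-- A left `Λ`-module `V` is totally reflexive if the evaluation map
`V → Hom_{Λᵐᵒᵖ}(Hom_Λ(V,Λ), Λ)`, `v ↦ (f ↦ f v)`, is bijective and `Ext^i_Λ(V, Λ) = 0` and
`Ext^i_{Λᵐᵒᵖ}(Hom_Λ(V,Λ), Λ) = 0` for all `i > 0`. -/
def IsTotallyReflexive (Λ : Type) [Ring Λ] (V : Type) [AddCommGroup V] [Module Λ V] : Prop :=
  Function.Bijective (fun v : V =>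
    ({ toFun := fun f => f v
       map_add' := fun _ _ => rfl
       map_smul' := fun _ _ => rfl } : (V →ₗ[Λ] Λ) →ₗ[Λᵐᵒᵖ] Λ)) ∧
  (∀ i : ℕ, 0 < i →
    Subsingleton (Abelian.Ext (ModuleCat.of Λ V) (ModuleCat.of Λ Λ) i)) ∧
  (∀ i : ℕ, 0 < i →
    Subsingleton (Abelian.Ext (ModuleCat.of Λᵐᵒᵖ (V →ₗ[Λ] Λ)) (ModuleCat.of Λᵐᵒᵖ Λ) i))

namespace CategoryTheory.Abelian.Ext

variable {C : Type*} [Category C] [Abelian C] [HasExt C]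

lemma subsingleton_of_retract {X Y Z : C} (h : Retract Y Z) (n : ℕ)
    [Subsingleton (Ext X Z n)] : Subsingleton (Ext X Y n) where
  allEq α β := by
    have factor : ∀ γ : Ext X Y n,
        γ = (γ.comp (mk₀ h.i) (add_zero n)).comp (mk₀ h.r) (add_zero n) := fun γ => by
      rw [comp_assoc_of_second_deg_zero, mk₀_comp_mk₀, h.retract, comp_mk₀_id]
    rw [factor α, factor β, Subsingleton.elim (α.comp (mk₀ h.i) _) (β.comp (mk₀ h.i) _)]

instance subsingleton_biproduct (X : C) {J : Type*} [Fintype J] (Y : J → C) [HasBiproduct Y]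
    (n : ℕ) [∀ j, Subsingleton (Ext X (Y j) n)] : Subsingleton (Ext X (⨁ Y) n) :=
  (addEquivBiproduct X (biproduct.isBilimit Y) n).subsingleton

end CategoryTheory.Abelian.Ext

namespace DerivedCategory

variable {C : Type*} [Category C] [Abelian C] [HasExt C] [HasDerivedCategory C]

noncomputable def singleFunctorObjHomEquivExt (X Y : C) {p q : ℤ} {t : ℕ} (h : q + t = p) :
    ((singleFunctor C p).obj X ⟶ (singleFunctor C q).obj Y) ≃ Abelian.Ext X Y t :=
  (shiftEquiv (DerivedCategory C) p).fullyFaithfulFunctor.homEquiv.trans <|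
    (Iso.homCongr (((singleFunctors C).shiftIso p 0 p (by omega)).app X)
      (((singleFunctors C).shiftIso p (-t) q (by omega)).app Y ≪≫
        (((singleFunctors C).shiftIso t (-t) 0 (by omega)).app Y).symm)).trans
    Abelian.Ext.homEquiv.symm

end DerivedCategory

universe u

namespace ModuleCat

variable {Λ : Type u} [Ring Λ]

lemma exists_retract_biproduct_of_projective (N : ModuleCat.{u} Λ) [Module.Finite Λ N]
    [Module.Projective Λ N] :
    ∃ r : ℕ, Nonempty (Retract N (⨁ fun _ : Fin r => ModuleCat.of Λ Λ)) := by
  obtain ⟨r, p, hp⟩ := Module.Finite.exists_fin' Λ N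
  obtain ⟨s, hs⟩ := p.exists_rightInverse_of_surjective (LinearMap.range_eq_top.2 hp)
  let e := biproductIsoPi fun _ : Fin r => ModuleCat.of Λ Λ
  exact ⟨r, ⟨{ i := ofHom s ≫ e.inv, r := e.hom ≫ ofHom p
               retract := by simp [← ofHom_comp, hs] }⟩⟩

variable [HasExt (ModuleCat.{u} Λ)]

lemma subsingleton_ext_of_finite_projective (M N : ModuleCat.{u} Λ)
    [Module.Finite Λ N] [Module.Projective Λ N] (n : ℕ)
    [Subsingleton (Abelian.Ext M (ModuleCat.of Λ Λ) n)] : Subsingleton (Abelian.Ext M N n) := by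
  obtain ⟨r, ⟨h⟩⟩ := N.exists_retract_biproduct_of_projective
  exact Abelian.Ext.subsingleton_of_retract h n

lemma singleFunctor_hom_eq_zero_of_finite_projective [HasDerivedCategory (ModuleCat.{u} Λ)]
    (M N : ModuleCat.{u} Λ) [Module.Finite Λ N] [Module.Projective Λ N]
    (hM : ∀ t : ℕ, 0 < t → Subsingleton (Abelian.Ext M (ModuleCat.of Λ Λ) t)) {p q : ℤ}
    (hqp : q < p)
    (f : (DerivedCategory.singleFunctor _ p).obj M ⟶ (DerivedCategory.singleFunctor _ q).obj N) :
    f = 0 := by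
  obtain ⟨t, rfl⟩ : ∃ t : ℕ, q + t = p := ⟨(p - q).toNat, by omega⟩
  have := hM t (by omega)
  have := subsingleton_ext_of_finite_projective M N t
  exact (DerivedCategory.singleFunctorObjHomEquivExt M N rfl).injective (Subsingleton.elim _ _)

end ModuleCat

namespace CochainComplex

variable {C : Type*} [Category C] [Abelian C] (K : CochainComplex C ℤ)

lemma isZero_of_isStrictlyGE_of_isStrictlyLE (a b : ℤ) [K.IsStrictlyGE a] [K.IsStrictlyLE b]
    (hab : b < a) : IsZero K := by
  rw [IsZero.iff_id_eq_zero]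
  ext i
  apply IsZero.eq_of_src
  obtain hi | hi := lt_or_ge i a
  · exact K.isZero_of_isStrictlyGE a i
  · exact K.isZero_of_isStrictlyLE b i

variable (a : ℤ) [K.IsStrictlyGE a]

/-- The projection onto the lowest term; its kernel is the brutal truncation `σ^{≥ a+1} K`. -/
noncomputable def toSingleOfIsStrictlyGE :
    K ⟶ (HomologicalComplex.single C (.up ℤ) a).obj (K.X a) :=
  HomologicalComplex.mkHomToSingle (𝟙 _) fun i hi =>
    (K.isZero_of_isStrictlyGE a i (by simp only [ComplexShape.up_Rel] at hi; omega)).eq_of_src _ _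

instance : IsIso ((K.toSingleOfIsStrictlyGE a).f a) := by
  rw [toSingleOfIsStrictlyGE, HomologicalComplex.mkHomToSingle_f]
  infer_instance

lemma shortExact_kernelSequence_toSingleOfIsStrictlyGE :
    (ShortComplex.kernelSequence (K.toSingleOfIsStrictlyGE a)).ShortExact := by
  have : Epi (K.toSingleOfIsStrictlyGE a) := by
    refine HomologicalComplex.epi_of_epi_f _ fun i => ?_
    by_cases hi : i = a
    · subst hi; infer_instance
    · exact (HomologicalComplex.isZero_single_obj_X _ _ _ _ hi).epi _
  exact .mk' (ShortComplex.kernelSequence_exact _) inferInstance this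

lemma shortExact_kernelSequence_toSingleOfIsStrictlyGE_map_eval (i : ℤ) :
    ((ShortComplex.kernelSequence (K.toSingleOfIsStrictlyGE a)).map
      (HomologicalComplex.eval C _ i)).ShortExact :=
  (K.shortExact_kernelSequence_toSingleOfIsStrictlyGE a).map_of_exact _

instance isStrictlyGE_kernel_toSingleOfIsStrictlyGE :
    (kernel (K.toSingleOfIsStrictlyGE a)).IsStrictlyGE (a + 1) := by
  rw [isStrictlyGE_iff]
  intro i hi
  obtain rfl | hi := eq_or_lt_of_le (Int.lt_add_one_iff.1 hi)
  · exact (K.shortExact_kernelSequence_toSingleOfIsStrictlyGE_map_eval i i).isIso_g_iff.1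
      (inferInstanceAs (IsIso ((K.toSingleOfIsStrictlyGE i).f i)))
  · exact IsZero.of_mono ((kernel.ι (K.toSingleOfIsStrictlyGE a)).f i)
      (K.isZero_of_isStrictlyGE a i)

instance isStrictlyLE_kernel_toSingleOfIsStrictlyGE (b : ℤ) [K.IsStrictlyLE b] :
    (kernel (K.toSingleOfIsStrictlyGE a)).IsStrictlyLE b := by
  rw [isStrictlyLE_iff]
  intro i hi
  exact IsZero.of_mono ((kernel.ι (K.toSingleOfIsStrictlyGE a)).f i)
    (K.isZero_of_isStrictlyLE b i)

lemma isIso_kernel_ι_toSingleOfIsStrictlyGE_f {i : ℤ} (hi : i ≠ a) :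
    IsIso ((kernel.ι (K.toSingleOfIsStrictlyGE a)).f i) :=
  (K.shortExact_kernelSequence_toSingleOfIsStrictlyGE_map_eval a i).isIso_f_iff.2
    (HomologicalComplex.isZero_single_obj_X (.up ℤ) _ _ _ hi)

end CochainComplex

namespace DerivedCategory

variable {C : Type*} [Category C] [Abelian C] [HasDerivedCategory C]
  (P : ObjectProperty (DerivedCategory C)) [P.IsTriangulatedClosed₂]
  [P.IsClosedUnderIsomorphisms] [P.ContainsZero]

lemma prop_Q_obj_of_isStrictlyGE_of_isStrictlyLE (K : CochainComplex C ℤ) (a b : ℤ)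
    [K.IsStrictlyGE a] [K.IsStrictlyLE b]
    (hK : ∀ i, a ≤ i → i ≤ b → P ((singleFunctor C i).obj (K.X i))) :
    P (Q.obj K) := by
  obtain ⟨n, hn⟩ : ∃ n : ℕ, b < a + n := ⟨(b - a + 1).toNat, by omega⟩
  induction n generalizing K a with
  | zero =>
    exact P.prop_of_isZero (Q.map_isZero
      (K.isZero_of_isStrictlyGE_of_isStrictlyLE a b (by simpa using hn)))
  | succ n ih =>
    obtain hab | hab := lt_or_ge b a
    · exact P.prop_of_isZero (Q.map_isZero (K.isZero_of_isStrictlyGE_of_isStrictlyLE a b hab))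
    let φ := K.toSingleOfIsStrictlyGE a
    refine P.ext_of_isTriangulatedClosed₂ _
      (triangleOfSES_distinguished (K.shortExact_kernelSequence_toSingleOfIsStrictlyGE a))
      (ih (kernel φ) (a + 1) (fun i hai hib => ?_) (by push_cast at hn; omega))
      (P.prop_of_iso ((singleFunctorIsoCompQ C a).app _) (hK a le_rfl hab))
    have := K.isIso_kernel_ι_toSingleOfIsStrictlyGE_f a (i := i) (by omega)
    exact P.prop_of_iso ((singleFunctor C i).mapIso (asIso ((kernel.ι φ).f i))).symm
      (hK i (by omega) hib)

end DerivedCategory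

theorem stmt_4_general (Λ : Type) [Ring Λ]
    (n : ℕ)
    (V : CochainComplex (ModuleCat Λ) ℤ)
    (hVconc : ∀ j : ℤ, (j < -(n : ℤ) ∨ 0 < j) → IsZero (V.X j))
    (hVrefl : ∀ j : ℤ, IsTotallyReflexive Λ (V.X j))
    (P : CochainComplex (ModuleCat Λ) ℤ)
    (hPbdd : ∃ a : ℤ, ∀ j : ℤ, j < a → IsZero (P.X j))
    (hPneg : ∀ j : ℤ, 0 < j → IsZero (P.X j))
    (hPfin : ∀ j : ℤ, Module.Finite Λ (P.X j))
    (hPproj : ∀ j : ℤ, Module.Projective Λ (P.X j))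
    (i : ℤ) (hi : (n : ℤ) < i)
    (g : DerivedCategory.Q.obj V ⟶ DerivedCategory.Q.obj (P⟦i⟧)) :
    g = 0 := by
  obtain ⟨a, ha⟩ := hPbdd
  have : V.IsStrictlyGE (-n) := (V.isStrictlyGE_iff _).2 fun j hj => hVconc j (.inl hj)
  have : V.IsStrictlyLE 0 := (V.isStrictlyLE_iff _).2 fun j hj => hVconc j (.inr hj)
  have : P.IsStrictlyGE a := (P.isStrictlyGE_iff _).2 ha
  have : P.IsStrictlyLE 0 := (P.isStrictlyLE_iff _).2 hPneg
  have : (P⟦i⟧).IsStrictlyGE (a - i) := P.isStrictlyGE_shift a i _ (by omega)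
  have : (P⟦i⟧).IsStrictlyLE (-i) := P.isStrictlyLE_shift 0 i _ (by omega)
  let S : ObjectProperty (DerivedCategory (ModuleCat Λ)) :=
    fun X => ∃ j, -(n : ℤ) ≤ j ∧ X = (DerivedCategory.singleFunctor _ j).obj (V.X j)
  have hP : S.rightOrthogonal (DerivedCategory.Q.obj (P⟦i⟧)) :=
    DerivedCategory.prop_Q_obj_of_isStrictlyGE_of_isStrictlyLE _ _ (a - i) (-i)
      fun b _ hb => by
        rintro _ f ⟨j, hj, rfl⟩
        have : Module.Finite Λ ((P⟦i⟧).X b) := hPfin (b + i)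
        have : Module.Projective Λ ((P⟦i⟧).X b) := hPproj (b + i)
        exact ModuleCat.singleFunctor_hom_eq_zero_of_finite_projective _ _ (hVrefl j).2.1
          (by omega) f
  exact DerivedCategory.prop_Q_obj_of_isStrictlyGE_of_isStrictlyLE S.rightOrthogonal.leftOrthogonal
    V (-n) 0 (fun j hj _ _ f hY => hY f ⟨j, hj, rfl⟩) g hP

/-- Let `Λ` be a finite-dimensional algebra over a field `k`, let `V` be a
cochain complex concentrated in degrees `[-n, 0]` all of whose terms are finitely generated
totally reflexive left `Λ`-modules, and let `P` be a bounded cochain complex of finitely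
generated projective `Λ`-modules with `P^j = 0` for `j > 0`. Then for every integer `i > n`,
every morphism `V ⟶ P⟦i⟧` in the derived category `D(Λ)` is zero. -/
theorem stmt_4 (k : Type) [Field k] (Λ : Type) [Ring Λ] [Algebra k Λ] [FiniteDimensional k Λ]
    (n : ℕ)
    (V : CochainComplex (ModuleCat Λ) ℤ)
    (hVconc : ∀ j : ℤ, (j < -(n : ℤ) ∨ 0 < j) → IsZero (V.X j))
    (hVfin : ∀ j : ℤ, Module.Finite Λ (V.X j))
    (hVrefl : ∀ j : ℤ, IsTotallyReflexive Λ (V.X j))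
    (P : CochainComplex (ModuleCat Λ) ℤ)
    (hPbdd : ∃ a : ℤ, ∀ j : ℤ, j < a → IsZero (P.X j))
    (hPneg : ∀ j : ℤ, 0 < j → IsZero (P.X j))
    (hPfin : ∀ j : ℤ, Module.Finite Λ (P.X j))
    (hPproj : ∀ j : ℤ, Module.Projective Λ (P.X j))
    (i : ℤ) (hi : (n : ℤ) < i)
    (g : DerivedCategory.Q.obj V ⟶ DerivedCategory.Q.obj (P⟦i⟧)) :
    g = 0 :=
  stmt_4_general Λ n V hVconc hVrefl P hPbdd hPneg hPfin hPproj i hi g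
end
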